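/- In the cyclotomic Hecke algebra $\mathcal{K}_2^{\mathbf v}$ over the integral domain $A$, an element $gT$ with $g \in R_m$ is central if and only if both $g$ and $X_1 g$ lie in $R_m^W$ (symmetric restricted polynomials). Hence $\mathcal{Z} \cap R_m T = MT$ where $M = \{g \in R_m^W : X_1 g \in R_m^W\}$. -/

import Mathlib

noncomputable section

/-- The ring `A = ℤ[q^{±1}, v₁^{±1}, …, v_m^{±1}]`, realized as the group
algebra of `ℤ × ℤ^m` over `ℤ`. -/
abbrev Av (m : ℕ) : Type := AddMonoidAlgebra ℤ (ℤ × (Fin m → ℤ))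

/-- The element `q`. -/
def qv (m : ℕ) : Av m := AddMonoidAlgebra.single (1, 0) 1

/-- The element `vᵢ`. -/
def vv (m : ℕ) (i : Fin m) : Av m := AddMonoidAlgebra.single (0, Pi.single i 1) 1

/-- The `j`-th elementary symmetric polynomial of `v₁, …, v_m`. -/
def ev (m : ℕ) (j : ℕ) : Av m :=
  ∑ s ∈ Finset.powersetCard j (Finset.univ : Finset (Fin m)), ∏ i ∈ s, vv m i

/-- The Laurent polynomial ring `A[X₁^{±1}, X₂^{±1}]`. -/
abbrev Lau (A : Type) [CommRing A] : Type := AddMonoidAlgebra A (ℤ × ℤ)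

variable (A : Type) [CommRing A]

/-- The monomial `X₁^i X₂^j`. -/
def Xm (i j : ℤ) : Lau A := AddMonoidAlgebra.single (i, j) 1

/-- The automorphism `s` interchanging `X₁` and `X₂`. -/
def sw (p : Lau A) : Lau A := AddMonoidAlgebra.ofCoeff (Finsupp.equivMapDomain (Equiv.prodComm ℤ ℤ) p.coeff)

/-- Constants. -/
def CC (a : A) : Lau A := algebraMap A (Lau A) a

/-- `p` is `m`-restricted. -/
def Res (m : ℕ) (p : Lau A) : Prop :=
  ∀ ab ∈ p.coeff.support, 0 ≤ ab.1 ∧ ab.1 ≤ (m : ℤ) - 1 ∧ 0 ≤ ab.2 ∧ ab.2 ≤ (m : ℤ) - 1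

/-- `f_v(X₁) = ∏ᵢ (X₁ - vᵢ)`. -/
def fv1 (m : ℕ) : Lau (Av m) := ∏ i : Fin m, (Xm (Av m) 1 0 - CC (Av m) (vv m i))

/-- `f_v(X₂) = ∏ᵢ (X₂ - vᵢ)`. -/
def fv2 (m : ℕ) : Lau (Av m) := ∏ i : Fin m, (Xm (Av m) 0 1 - CC (Av m) (vv m i))

/-- The complete homogeneous symmetric polynomial `H_k` in `X₁, X₂`. -/
def Hc (k : ℕ) : Lau A := ∑ i ∈ Finset.range (k + 1), Xm A (i : ℤ) ((k : ℤ) - (i : ℤ))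

/-- The element `z = (-1)^{m+1} e_m + X₁X₂ ∑_{j=0}^{m-2} (-1)^j e_j H_{m-2-j}`. -/
def zel (m : ℕ) : Lau (Av m) :=
  CC (Av m) ((-1 : Av m) ^ (m + 1) * ev m m) +
    Xm (Av m) 1 1 *
      ∑ j ∈ Finset.range (m - 1), CC (Av m) ((-1 : Av m) ^ j * ev m j) * Hc (Av m) (m - 2 - j)

/-! If `gT` is central, comparing `T · gT` with `gT · T` in the normal form `R_m ⊕ R_m T`, using the
Bernstein relation and `T² = (q - 1) T + q`, gives `q · s(g) = q · g`, so `g` is symmetric. For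
symmetric `g` one has `gT · X₁ = T · X₁g`, so `gT` commutes with `X₁` exactly when `T` commutes with
`X₁g`. Reducing `X₁g` modulo the monic `f_v(X₁)` to a restricted `r`, the normal form of `T r` then
shows that `r` is symmetric.

Conversely `T` commutes with every symmetric Laurent polynomial, so `gT` commutes with `T`, with
`X₁` (by the identity above), with `X₁ + X₂`, hence with all Laurent polynomials; together with `T`
these span the algebra. -/

section Laurent

variable {A}

lemma Xm_mul (i j k l : ℤ) : Xm A i j * Xm A k l = Xm A (i + k) (j + l) := by
  simp [Xm, AddMonoidAlgebra.single_mul_single]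

lemma Xm_pow (i j : ℤ) (n : ℕ) : Xm A i j ^ n = Xm A (n * i) (n * j) := by
  simp [Xm, AddMonoidAlgebra.single_pow]

variable (A) in
def swAlgEquiv : Lau A ≃ₐ[A] Lau A := AddMonoidAlgebra.domCongr A A (AddEquiv.prodComm)

lemma sw_eq_swAlgEquiv (p : Lau A) : sw A p = swAlgEquiv A p := by
  ext n
  simp [sw, swAlgEquiv, AddMonoidAlgebra.coeff_domCongr]

lemma sw_Xm (i j : ℤ) : sw A (Xm A i j) = Xm A j i := by
  simp [sw_eq_swAlgEquiv, swAlgEquiv, Xm, AddMonoidAlgebra.domCongr_single]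

lemma sw_mul (p p' : Lau A) : sw A (p * p') = sw A p * sw A p' := by
  simp only [sw_eq_swAlgEquiv, map_mul]

lemma sw_add (p p' : Lau A) : sw A (p + p') = sw A p + sw A p' := by
  simp only [sw_eq_swAlgEquiv, map_add]

lemma sw_one : sw A 1 = 1 := by
  rw [sw_eq_swAlgEquiv, map_one]

end Laurent

section Restricted

variable {A} (m : ℕ)

def restricted : Submodule A (Lau A) :=
  AddMonoidAlgebra.supported A A (Set.Icc 0 ((m : ℤ) - 1) ×ˢ Set.Icc 0 ((m : ℤ) - 1))

variable {m}

lemma res_iff_mem_restricted {p : Lau A} : Res A m p ↔ p ∈ restricted m := by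
  simp only [Res, restricted, AddMonoidAlgebra.mem_supported, Set.subset_def, Finset.mem_coe,
    Set.mem_prod, Set.mem_Icc, and_assoc]

lemma restricted_le {N : Submodule A (Lau A)}
    (h : ∀ i j : ℤ, 0 ≤ i → i ≤ m - 1 → 0 ≤ j → j ≤ m - 1 → Xm A i j ∈ N) :
    restricted m ≤ N := by
  rw [restricted, AddMonoidAlgebra.supported_eq_span_single, Submodule.span_le]
  rintro _ ⟨⟨i, j⟩, ⟨⟨hi₀, hi⟩, ⟨hj₀, hj⟩⟩, rfl⟩
  exact h i j hi₀ hi hj₀ hj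

lemma Xm_mem_restricted {i j : ℤ} (hi₀ : 0 ≤ i) (hi : i ≤ m - 1) (hj₀ : 0 ≤ j) (hj : j ≤ m - 1) :
    Xm A i j ∈ restricted m := by
  rw [restricted, AddMonoidAlgebra.supported_eq_span_single]
  exact Submodule.subset_span ⟨(i, j), ⟨⟨hi₀, hi⟩, ⟨hj₀, hj⟩⟩, rfl⟩

lemma sw_mem_restricted {p : Lau A} (hp : p ∈ restricted m) : sw A p ∈ restricted m := by
  suffices restricted m ≤ (restricted m).comap (swAlgEquiv A).toLinearMap from by
    simpa [sw_eq_swAlgEquiv] using this hp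
  refine restricted_le fun i j hi₀ hi hj₀ hj => ?_
  simpa [← sw_eq_swAlgEquiv, sw_Xm] using Xm_mem_restricted hj₀ hj hi₀ hi

end Restricted

section DivisionBySwap

variable {A} {m : ℕ}

lemma exists_mul_one_sub_eq_Xm_sub_Xm {a b : ℤ} (hab : a ≤ b) (ha : 0 ≤ a) (hb : b ≤ m - 1) :
    ∃ h ∈ restricted m, h * (1 - Xm A 1 0 * Xm A 0 (-1)) = Xm A a b - Xm A b a := by
  set n := (b - a).toNat
  have hn : (n : ℤ) = b - a := Int.toNat_of_nonneg (by omega)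
  have hpow (k : ℕ) : Xm A a b * (Xm A 1 0 * Xm A 0 (-1)) ^ k = Xm A (a + k) (b - k) := by
    rw [Xm_mul, Xm_pow, Xm_mul]
    congr 1 <;> ring
  refine ⟨∑ k ∈ Finset.range n, Xm A (a + k) (b - k), ?_, ?_⟩
  · refine Submodule.sum_mem _ fun k hk => Xm_mem_restricted ?_ ?_ ?_ ?_ <;>
      have := Finset.mem_range.mp hk <;> omega
  · simp_rw [← hpow, ← Finset.mul_sum, mul_assoc, geom_sum_mul_neg, mul_sub, mul_one, hpow, hn]
    congr 2 <;> ring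

lemma exists_mul_one_sub_eq_sub_sw {p : Lau A} (hp : p ∈ restricted m) :
    ∃ h ∈ restricted m, h * (1 - Xm A 1 0 * Xm A 0 (-1)) = p - sw A p := by
  let N : Submodule A (Lau A) := (Submodule.map (LinearMap.mulRight A (1 - Xm A 1 0 * Xm A 0 (-1)))
    (restricted m)).comap (LinearMap.id - (swAlgEquiv A).toLinearMap)
  suffices restricted m ≤ N by simpa [N, sw_eq_swAlgEquiv] using this hp
  refine restricted_le fun i j hi₀ hi hj₀ hj => ?_
  simp only [N, Submodule.mem_comap, Submodule.mem_map, LinearMap.mulRight_apply,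
    LinearMap.sub_apply, LinearMap.id_apply, AlgEquiv.toLinearMap_apply, ← sw_eq_swAlgEquiv, sw_Xm]
  rcases le_total i j with hij | hji
  · exact exists_mul_one_sub_eq_Xm_sub_Xm hij hi₀ hj
  · obtain ⟨h, hh, hspec⟩ := exists_mul_one_sub_eq_Xm_sub_Xm (A := A) hji hj₀ hi
    exact ⟨-h, neg_mem hh, by rw [neg_mul, hspec, neg_sub]⟩

end DivisionBySwap

section Reduction

open Polynomial

variable {A} {m : ℕ}

lemma aeval_Xm_of_monic {P : A[X]} (hP : P.Monic) :
    aeval (Xm A 1 0) P =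
      Xm A P.natDegree 0 + ∑ k ∈ Finset.range P.natDegree, P.coeff k • Xm A k 0 := by
  conv_lhs => rw [hP.as_sum]
  simp [Xm_pow, Algebra.smul_def]

lemma Xm_one_zero_mul_mem_restricted_sup {P : A[X]} (hP : P.Monic) (hdeg : P.natDegree = m)
    {g : Lau A} (hg : g ∈ restricted m) :
    Xm A 1 0 * g ∈ restricted m ⊔ (Ideal.span {aeval (Xm A 1 0) P}).restrictScalars A := by
  let N := (restricted m ⊔ (Ideal.span {aeval (Xm A 1 0) P}).restrictScalars A).comap
    (LinearMap.mulLeft A (Xm A 1 0))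
  suffices restricted m ≤ N from this hg
  refine restricted_le fun i j hi₀ hi hj₀ hj => ?_
  simp only [N, Submodule.mem_comap, LinearMap.mulLeft_apply, Xm_mul, zero_add]
  rw [add_comm 1 i]
  by_cases him : i + 1 ≤ m - 1
  · exact Submodule.mem_sup_left (Xm_mem_restricted (by omega) him hj₀ hj)
  · have hX : Xm A (i + 1) j = aeval (Xm A 1 0) P * Xm A 0 j
        - ∑ k ∈ Finset.range m, P.coeff k • Xm A k j := by
      simp only [aeval_Xm_of_monic hP, hdeg, add_mul, Finset.sum_mul, smul_mul_assoc, Xm_mul]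
      rw [show i + 1 = m by omega]
      simp
    rw [hX]
    refine sub_mem (Submodule.mem_sup_right (Ideal.mul_mem_right _ _ (Ideal.subset_span rfl)))
      (Submodule.mem_sup_left (Submodule.sum_mem _ fun k hk => Submodule.smul_mem _ _ ?_))
    exact Xm_mem_restricted (by omega) (by have := Finset.mem_range.mp hk; omega) hj₀ hj

end Reduction

section Centralizer

variable {A} {B : Type} [Ring B] [Algebra A B]

lemma commute_map_of_commute_Xm (φ : Lau A →ₐ[A] B) {b : B} (h₁ : Commute b (φ (Xm A 1 0)))
    (h₂ : Commute b (φ (Xm A 0 1))) (p : Lau A) : Commute b (φ p) := by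
  -- Monomials are the images of the group `ℤ × ℤ`, so they are units generated by `X₁` and `X₂`.
  let u : Multiplicative (ℤ × ℤ) →* Bˣ :=
    ((φ : Lau A →* B).comp (AddMonoidAlgebra.of A (ℤ × ℤ))).toHomUnits
  have hdecomp (n : ℤ × ℤ) :
      Multiplicative.ofAdd n = .ofAdd (1, 0) ^ n.1 * .ofAdd (0, 1) ^ n.2 := by
    rw [← ofAdd_zsmul, ← ofAdd_zsmul, ← ofAdd_add]
    simp
  induction p using AddMonoidAlgebra.induction_on with
  | of n =>
    have h₁' : Commute b (u (.ofAdd (1, 0))) := h₁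
    have h₂' : Commute b (u (.ofAdd (0, 1))) := h₂
    have hn : (u (.ofAdd n) : B) = ↑(u (.ofAdd (1, 0)) ^ n.1 * u (.ofAdd (0, 1)) ^ n.2) := by
      rw [hdecomp n, map_mul, map_zpow, map_zpow]
    change Commute b (u (.ofAdd n))
    exact hn ▸ (h₁'.units_zpow_right n.1).mul_right (h₂'.units_zpow_right n.2)
  | add p p' hp hp' => simpa only [map_add] using hp.add_right hp'
  | smul a p hp => simpa only [map_smul] using hp.smul_right a

end Centralizer

section Hecke

variable {A} {K : Type} [Ring K] [Algebra A K]

/-- The Bernstein relation `T f = (s f) T + (q - 1) (f - s f) / (1 - X₁X₂⁻¹)`, the quotient being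
supplied as `g`. -/
def BernsteinRelation (q : A) (ι : Lau A →ₐ[A] K) (T : K) : Prop :=
  ∀ f g : Lau A, g * (1 - Xm A 1 0 * Xm A 0 (-1)) = f - sw A f →
    T * ι f = ι (sw A f) * T + algebraMap A K (q - 1) * ι g

/-- The basis theorem `K = R_m ⊕ R_m T`. -/
def UniqueNormalForm (m : ℕ) (ι : Lau A →ₐ[A] K) (T : K) : Prop :=
  ∀ h : K, ∃! fg : Lau A × Lau A, Res A m fg.1 ∧ Res A m fg.2 ∧ h = ι fg.1 + ι fg.2 * T

variable {q : A} {m : ℕ} {ι : Lau A →ₐ[A] K} {T : K}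

lemma T_mul_T_of_quadratic (hquad : (T - algebraMap A K q) * (T + 1) = 0) :
    T * T = (q - 1) • T + q • 1 := by
  rw [← sub_eq_zero, ← hquad, Algebra.smul_def, Algebra.smul_def, map_sub, map_one]
  noncomm_ring

lemma UniqueNormalForm.eq_of_add_mul_eq (hN : UniqueNormalForm m ι T) {a b c d : Lau A}
    (ha : a ∈ restricted m) (hb : b ∈ restricted m) (hc : c ∈ restricted m) (hd : d ∈ restricted m)
    (h : ι a + ι b * T = ι c + ι d * T) : a = c ∧ b = d := by
  simp only [← res_iff_mem_restricted] at ha hb hc hd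
  exact Prod.ext_iff.mp ((hN _).unique (y₁ := (a, b)) (y₂ := (c, d)) ⟨ha, hb, rfl⟩ ⟨hc, hd, h⟩)

lemma UniqueNormalForm.mem_center (hN : UniqueNormalForm m ι T) {z : K}
    (hι : ∀ p, Commute z (ι p)) (hT : Commute z T) : z ∈ Set.center K := by
  refine Semigroup.mem_center_iff.mpr fun x => ?_
  obtain ⟨⟨f, g⟩, -, -, rfl⟩ := (hN x).exists
  exact ((hι f).add_right ((hι g).mul_right hT)).symm.eq

namespace BernsteinRelation

lemma commute_of_sw_eq (hB : BernsteinRelation q ι T) {p : Lau A} (hp : sw A p = p) :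
    Commute T (ι p) := by
  have h := hB p 0 (by rw [zero_mul, hp, sub_self])
  rwa [hp, map_zero, mul_zero, add_zero] at h

lemma T_mul_Xm_one_zero_mul (hB : BernsteinRelation q ι T) {p : Lau A} (hp : sw A p = p) :
    T * ι (Xm A 1 0 * p) = ι (Xm A 0 1 * p) * T - (q - 1) • ι (Xm A 0 1 * p) := by
  have hsw : sw A (Xm A 1 0 * p) = Xm A 0 1 * p := by rw [sw_mul, hp, sw_Xm]
  have hdiv : -(Xm A 0 1 * p) * (1 - Xm A 1 0 * Xm A 0 (-1)) =
      Xm A 1 0 * p - sw A (Xm A 1 0 * p) := by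
    have hX : Xm A 0 1 * (Xm A 1 0 * Xm A 0 (-1)) = Xm A 1 0 := by
      rw [Xm_mul, Xm_mul]
      norm_num
    rw [hsw]
    linear_combination p * hX
  rw [hB _ _ hdiv, hsw, map_neg, mul_neg, ← Algebra.smul_def, ← sub_eq_add_neg]

lemma mul_T_mul_Xm_one_zero (hB : BernsteinRelation q ι T) {g : Lau A} (hg : sw A g = g) :
    ι g * T * ι (Xm A 1 0) = T * ι (Xm A 1 0 * g) := by
  have hX := hB.T_mul_Xm_one_zero_mul (p := 1) sw_one
  rw [mul_one, mul_one] at hX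
  rw [mul_assoc, hX, hB.T_mul_Xm_one_zero_mul hg, mul_sub, mul_smul_comm, ← mul_assoc, ← map_mul,
    mul_comm g]

lemma commute_Xm_one_zero_iff (hB : BernsteinRelation q ι T) {g : Lau A} (hg : sw A g = g) :
    Commute (ι g * T) (ι (Xm A 1 0)) ↔ Commute T (ι (Xm A 1 0 * g)) := by
  rw [commute_iff_eq, commute_iff_eq, hB.mul_T_mul_Xm_one_zero hg, map_mul, mul_assoc]

lemma commute_mul_T_of_sw_eq (hB : BernsteinRelation q ι T) (g : Lau A) {p : Lau A}
    (hp : sw A p = p) : Commute (ι g * T) (ι p) :=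
  ((Commute.all g p).map ι).mul_left (hB.commute_of_sw_eq hp)

lemma exists_T_mul (hB : BernsteinRelation q ι T) {p : Lau A} (hp : p ∈ restricted m) :
    ∃ h ∈ restricted m, T * ι p = ι h + ι (sw A p) * T := by
  obtain ⟨h, hh, hdiv⟩ := exists_mul_one_sub_eq_sub_sw hp
  refine ⟨(q - 1) • h, Submodule.smul_mem _ _ hh, ?_⟩
  rw [hB p h hdiv, map_smul, Algebra.smul_def, add_comm]

lemma sw_eq_of_commute (hB : BernsteinRelation q ι T) (hN : UniqueNormalForm m ι T) {p : Lau A}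
    (hp : p ∈ restricted m) (hc : Commute T (ι p)) : sw A p = p := by
  obtain ⟨h, hh, hT⟩ := hB.exists_T_mul hp
  refine (hN.eq_of_add_mul_eq hh (sw_mem_restricted hp) (zero_mem _) hp ?_).2
  rw [← hT, hc.eq, map_zero, zero_add]

lemma sw_eq_of_commute_mul_T (hB : BernsteinRelation q ι T) (hN : UniqueNormalForm m ι T)
    (hquad : (T - algebraMap A K q) * (T + 1) = 0) (hq : IsUnit q) {g : Lau A}
    (hg : g ∈ restricted m) (hc : Commute T (ι g * T)) : sw A g = g := by
  obtain ⟨h, hh, hT⟩ := hB.exists_T_mul hg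
  have hTT := T_mul_T_of_quadratic hquad
  have hleft : T * (ι g * T) = ι (q • sw A g) + ι (h + (q - 1) • sw A g) * T := by
    rw [← mul_assoc, hT, add_mul, mul_assoc, hTT]
    simp only [map_add, map_smul, add_mul, mul_add, smul_mul_assoc, mul_smul_comm, mul_one]
    abel
  have hright : ι g * T * T = ι (q • g) + ι ((q - 1) • g) * T := by
    rw [mul_assoc, hTT]
    simp only [map_smul, mul_add, smul_mul_assoc, mul_smul_comm, mul_one]
    abel
  have hnf := hN.eq_of_add_mul_eq (Submodule.smul_mem _ q (sw_mem_restricted hg))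
    (add_mem hh (Submodule.smul_mem _ _ (sw_mem_restricted hg))) (Submodule.smul_mem _ q hg)
    (Submodule.smul_mem _ _ hg) (hleft ▸ hright ▸ hc.eq)
  exact hq.smul_left_cancel.mp hnf.1

end BernsteinRelation

end Hecke

section Cyclotomic

open Polynomial (X C aeval monic_prod_of_monic monic_X_sub_C)

variable {m : ℕ}

lemma isUnit_qv : IsUnit (qv m) :=
  IsUnit.of_mul_eq_one (AddMonoidAlgebra.single (-1, 0) 1) (by
    simp [qv, AddMonoidAlgebra.single_mul_single]
    rfl)

lemma fv1_eq_aeval : fv1 m = aeval (Xm (Av m) 1 0) (∏ i, (X - C (vv m i))) := by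
  simp [fv1, CC]

lemma monic_prod_X_sub_C_vv : (∏ i, (X - C (vv m i))).Monic :=
  monic_prod_of_monic _ _ fun i _ => monic_X_sub_C (vv m i)

lemma natDegree_prod_X_sub_C_vv : (∏ i, (X - C (vv m i))).natDegree = m := by
  simp

end Cyclotomic

/- STATEMENT 18: in 𝒦₂^v, an element gT with g ∈ R_m is central if and only
if both g and X₁g lie in R_m^W; hence 𝒵 ∩ R_m T = M T with
M = {g ∈ R_m^W : X₁ g ∈ R_m^W}. -/
theorem stmt18_general (m : ℕ)
    (K : Type) [Ring K] [Algebra (Av m) K]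
    (ι : Lau (Av m) →ₐ[Av m] K) (T : K)
    (hquad : (T - algebraMap (Av m) K (qv m)) * (T + 1) = 0)
    (hcomm : ∀ f g : Lau (Av m),
      g * (1 - Xm (Av m) 1 0 * Xm (Av m) 0 (-1)) = f - sw (Av m) f →
      T * ι f = ι (sw (Av m) f) * T + algebraMap (Av m) K (qv m - 1) * ι g)
    (hcyc : ι (fv1 m) = 0)
    (hfree : ∀ h : K, ∃! fg : Lau (Av m) × Lau (Av m),
      Res (Av m) m fg.1 ∧ Res (Av m) m fg.2 ∧ h = ι fg.1 + ι fg.2 * T) :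
    ∀ g : Lau (Av m), Res (Av m) m g →
      (ι g * T ∈ Set.center K ↔
        (sw (Av m) g = g ∧
          ∃ g' : Lau (Av m), sw (Av m) g' = g' ∧ ι g' = ι (Xm (Av m) 1 0 * g))) := by
  intro g hg
  rw [res_iff_mem_restricted] at hg
  have hB : BernsteinRelation (qv m) ι T := hcomm
  have hN : UniqueNormalForm m ι T := hfree
  constructor
  · intro hz
    have hcent (x : K) : Commute x (ι g * T) := Semigroup.mem_center_iff.mp hz x
    have hsym := hB.sw_eq_of_commute_mul_T hN hquad isUnit_qv hg (hcent T)
    obtain ⟨r, hr, s, hs, hrs⟩ := Submodule.mem_sup.mp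
      (Xm_one_zero_mul_mem_restricted_sup monic_prod_X_sub_C_vv natDegree_prod_X_sub_C_vv hg)
    obtain ⟨a, rfl⟩ := Ideal.mem_span_singleton'.mp hs
    have hιr : ι r = ι (Xm (Av m) 1 0 * g) := by
      rw [← hrs, map_add, map_mul, ← fv1_eq_aeval, hcyc, mul_zero, add_zero]
    refine ⟨hsym, r, hB.sw_eq_of_commute hN hr ?_, hιr⟩
    rw [hιr, ← hB.commute_Xm_one_zero_iff hsym]
    exact (hcent _).symm
  · rintro ⟨hsym, g', hsym', hg'⟩
    have hX₁ : Commute (ι g * T) (ι (Xm (Av m) 1 0)) :=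
      (hB.commute_Xm_one_zero_iff hsym).mpr (hg' ▸ hB.commute_of_sw_eq hsym')
    have hX₂ : Commute (ι g * T) (ι (Xm (Av m) 0 1)) := by
      have hsum := hB.commute_mul_T_of_sw_eq g (p := Xm (Av m) 1 0 + Xm (Av m) 0 1)
        (by rw [sw_add, sw_Xm, sw_Xm, add_comm])
      simpa using hsum.sub_right hX₁
    have hT : Commute (ι g * T) T := (hB.commute_of_sw_eq hsym).symm.mul_left (Commute.refl T)
    exact hN.mem_center (commute_map_of_commute_Xm ι hX₁ hX₂) hT

theorem stmt18 (m : ℕ)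
    (K : Type) [Ring K] [Algebra (Av m) K]
    (ι : Lau (Av m) →ₐ[Av m] K) (T : K)
    (hquad : (T - algebraMap (Av m) K (qv m)) * (T + 1) = 0)
    (hTX : T * ι (Xm (Av m) 1 0) * T = algebraMap (Av m) K (qv m) * ι (Xm (Av m) 0 1))
    (hcomm : ∀ f g : Lau (Av m),
      g * (1 - Xm (Av m) 1 0 * Xm (Av m) 0 (-1)) = f - sw (Av m) f →
      T * ι f = ι (sw (Av m) f) * T + algebraMap (Av m) K (qv m - 1) * ι g)
    (hcyc : ι (fv1 m) = 0)
    (hfree : ∀ h : K, ∃! fg : Lau (Av m) × Lau (Av m),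
      Res (Av m) m fg.1 ∧ Res (Av m) m fg.2 ∧ h = ι fg.1 + ι fg.2 * T) :
    ∀ g : Lau (Av m), Res (Av m) m g →
      (ι g * T ∈ Set.center K ↔
        (sw (Av m) g = g ∧
          ∃ g' : Lau (Av m), sw (Av m) g' = g' ∧ ι g' = ι (Xm (Av m) 1 0 * g))) :=
  stmt18_general m K ι T hquad hcomm hcyc hfree
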